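/- arXiv:2308.16090 — 8 statements merged into one kernel-verified Lean document; each statement's English description precedes it below -/
import Mathlib

section
/- Let 0 → K → L → M → 0 be a short exact sequence of left A-modules (i.e., there are an injective A-linear map f : K → L and a surjective A-linear map g : L → M with range f = ker g). If K and M are s-unital, then L is s-unital. -/
/-- A left `A`-module `M` is *s-unital* (with respect to a two-sided ideal `I ⊆ A`)
if every `m ∈ M` satisfies `e • m = m` for some `e ∈ I`. -/
def IsSUnitalModule {A : Type*} [Ring A] (I : TwoSidedIdeal A)
    (M : Type*) [AddCommGroup M] [Module A M] : Prop :=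
  ∀ m : M, ∃ e ∈ I, e • m = m

/-- If `0 → K → L → M → 0` is a short exact sequence of left `A`-modules and `K`, `M`
are s-unital, then `L` is s-unital. -/
theorem sUnital_of_shortExact {A : Type*} [Ring A] (I : TwoSidedIdeal A)
    {K L M : Type*} [AddCommGroup K] [Module A K] [AddCommGroup L] [Module A L]
    [AddCommGroup M] [Module A M]
    (f : K →ₗ[A] L) (g : L →ₗ[A] M)
    (hf : Function.Injective f) (hg : Function.Surjective g)
    (hfg : LinearMap.range f = LinearMap.ker g)
    (hK : IsSUnitalModule I K) (hM : IsSUnitalModule I M) :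
    IsSUnitalModule I L := by
  intro l
  obtain ⟨e, heI, he⟩ := hM (g l)
  have hker : l - e • l ∈ LinearMap.ker g := by
    simp [LinearMap.mem_ker, map_sub, he]
  rw [← hfg] at hker
  obtain ⟨k, hk⟩ := hker
  obtain ⟨e', he'I, he'⟩ := hK k
  refine ⟨e + e' - e' * e, ?_, ?_⟩
  · exact I.sub_mem (I.add_mem heI he'I) (I.mul_mem_right _ _ he'I)
  · have : e' • (l - e • l) = l - e • l := by
      rw [← hk, ← map_smul, he']
    calc (e + e' - e' * e) • l
        = e • l + e' • (l - e • l) := by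
          rw [sub_smul, add_smul, mul_smul, smul_sub]; abel
      _ = l := by rw [this]; abel
end

section
/- (Tominaga) If M is an s-unital left A-module, then for every finite family of elements m₁, …, mₙ ∈ M there exists a single element e ∈ I such that e·mᵢ = mᵢ for all 1 ≤ i ≤ n. -/
/-- (Tominaga) If `M` is an s-unital left `A`-module, then for every finite family of
elements `m₁, …, mₙ ∈ M` there is a single `e ∈ I` with `e • mᵢ = mᵢ` for all `i`. -/
theorem exists_simultaneous_left_unit_of_sUnital {A : Type*} [Ring A]
    (I : TwoSidedIdeal A) (M : Type*) [AddCommGroup M] [Module A M]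
    (hM : IsSUnitalModule I M) (n : ℕ) (m : Fin n → M) :
    ∃ e ∈ I, ∀ i : Fin n, e • m i = m i := by
  induction n with
  | zero => exact ⟨0, I.zero_mem, fun i => i.elim0⟩
  | succ n ih =>
    obtain ⟨e, he, hes⟩ := ih (fun i => m i.succ)
    obtain ⟨f, hf, hfs⟩ := hM (m 0 - e • m 0)
    refine ⟨e + f - f * e, I.sub_mem (I.add_mem he hf) (I.mul_mem_right _ _ hf), fun i => ?_⟩
    have key : ∀ x : M, e • x = x → (e + f - f * e) • x = x := by
      intro x hx
      rw [sub_smul, add_smul, mul_smul, hx]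
      abel
    rcases Fin.eq_zero_or_eq_succ i with rfl | ⟨j, rfl⟩
    · have : f • (m 0 - e • m 0) = m 0 - e • m 0 := hfs
      rw [smul_sub] at this
      rw [sub_smul, add_smul, mul_smul]
      have := this
      -- (e + f - f*e) • m 0 = e•m0 + f•m0 - f•(e•m0) = e•m0 + (m0 - e•m0) = m0
      have h2 : f • m 0 - f • (e • m 0) = m 0 - e • m 0 := this
      linear_combination (norm := abel) h2
    · exact key _ (hes j)
end

section
/- (Tominaga) Assume the ideal I is s-unital. Then every s-unital A-module M is t-unital; that is, the map μ_M : I ⊗_A M → M is bijective. -/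
open TensorProduct

/-- The natural `A`-linear map `μ_M : I ⊗[A] M → M` determined by `i ⊗ m ↦ i • m`.
An `A`-module `M` is *t-unital* (with respect to the ideal `I`) if `μ_M` is bijective. -/
noncomputable def muMap {A : Type*} [CommRing A] (I : Ideal A)
    (M : Type*) [AddCommGroup M] [Module A M] : I ⊗[A] M →ₗ[A] M :=
  TensorProduct.lift ((LinearMap.lsmul A M).comp I.subtype)

/-- The natural `A`-linear map `ε_M : M → Hom_A(I, M)`, `m ↦ (i ↦ i • m)`.
An `A`-module `M` is *c-unital* (with respect to the ideal `I`) if `ε_M` is bijective. -/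
def epsMap {A : Type*} [CommRing A] (I : Ideal A)
    (M : Type*) [AddCommGroup M] [Module A M] : M →ₗ[A] (I →ₗ[A] M) :=
  ((LinearMap.lsmul A M).comp I.subtype).flip

/-- In an s-unital ideal, any finite family of elements has a common left unit. -/
lemma common_unit_of_sUnital {A : Type*} [CommRing A] (I : Ideal A)
    (hI : ∀ r ∈ I, ∃ e ∈ I, e * r = r) (S : Finset A) (hS : ∀ r ∈ S, r ∈ I) :
    ∃ e ∈ I, ∀ r ∈ S, e * r = r := by
  classical
  induction S using Finset.induction with
  | empty => exact ⟨0, I.zero_mem, by simp⟩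
  | @insert a s ha ih =>
    obtain ⟨e₁, he₁I, he₁⟩ := ih (fun r hr => hS r (Finset.mem_insert_of_mem hr))
    have haI : a ∈ I := hS a (Finset.mem_insert_self a s)
    obtain ⟨f, hfI, hf⟩ := hI (a - e₁ * a) (I.sub_mem haI (I.mul_mem_left e₁ haI))
    refine ⟨e₁ + f - f * e₁, ?_, ?_⟩
    · exact I.sub_mem (I.add_mem he₁I hfI) (I.mul_mem_left f he₁I)
    · intro r hr
      rcases Finset.mem_insert.mp hr with rfl | hr
      · have : f * (r - e₁ * r) = r - e₁ * r := hf
        ring_nf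
        ring_nf at this
        linear_combination this
      · have h := he₁ r hr
        ring_nf
        linear_combination (1 - f) * h

/-- (Tominaga) If the ideal `I` is s-unital, then every s-unital `A`-module `M`
is t-unital, i.e. `μ_M : I ⊗[A] M → M` is bijective. -/
theorem bijective_muMap_of_sUnital {A : Type*} [CommRing A] (I : Ideal A)
    (hI : ∀ r ∈ I, ∃ e ∈ I, e * r = r)
    (M : Type*) [AddCommGroup M] [Module A M]
    (hM : ∀ m : M, ∃ e ∈ I, e • m = m) :
    Function.Bijective (muMap I M) := by
  classical
  constructor
  · rw [← LinearMap.ker_eq_bot, eq_bot_iff]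
    intro x hx
    rw [LinearMap.mem_ker] at hx
    obtain ⟨S, rfl⟩ := TensorProduct.exists_finset x
    obtain ⟨e, heI, he⟩ := common_unit_of_sUnital I hI (S.image fun p => (p.1 : A))
      (by rintro r hr
          obtain ⟨p, _, rfl⟩ := Finset.mem_image.mp hr
          exact p.1.2)
    have key : (∑ p ∈ S, p.1 ⊗ₜ[A] p.2)
        = (⟨e, heI⟩ : I) ⊗ₜ[A] (muMap I M (∑ p ∈ S, p.1 ⊗ₜ[A] p.2)) := by
      rw [map_sum, TensorProduct.tmul_sum]
      refine Finset.sum_congr rfl fun p hp => ?_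
      have h1 : ((p.1 : A) • (⟨e, heI⟩ : I)) = p.1 := by
        apply Subtype.ext
        have := he (p.1 : A) (Finset.mem_image_of_mem _ hp)
        simpa [mul_comm] using this
      calc p.1 ⊗ₜ[A] p.2 = ((p.1 : A) • (⟨e, heI⟩ : I)) ⊗ₜ[A] p.2 := by rw [h1]
        _ = (⟨e, heI⟩ : I) ⊗ₜ[A] ((p.1 : A) • p.2) := TensorProduct.smul_tmul _ _ _
        _ = (⟨e, heI⟩ : I) ⊗ₜ[A] (muMap I M (p.1 ⊗ₜ[A] p.2)) := by
            simp [muMap]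
    rw [Submodule.mem_bot, key, hx, TensorProduct.tmul_zero]
  · intro m
    obtain ⟨e, heI, he⟩ := hM m
    exact ⟨(⟨e, heI⟩ : I) ⊗ₜ[A] m, by simpa [muMap] using he⟩
end

section
/- Assume the ideal I is t-unital. Then for every A-module M the A-module I ⊗_A M is t-unital; that is, the A-linear map I ⊗_A (I ⊗_A M) → I ⊗_A M determined by i ⊗ t ↦ i·t is bijective. -/
open TensorProduct

/-- If the ideal `I` is t-unital, then for every `A`-module `M` the `A`-module
`I ⊗[A] M` is t-unital. -/
theorem bijective_muMap_tensor {A : Type*} [CommRing A] (I : Ideal A)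
    (hI : Function.Bijective (muMap I I))
    (M : Type*) [AddCommGroup M] [Module A M] :
    Function.Bijective (muMap I (I ⊗[A] M)) := by
  have key : muMap I (I ⊗[A] M) =
      (LinearMap.rTensor M (muMap I I)).comp
        (TensorProduct.assoc A I I M).symm.toLinearMap := by
    ext i j m
    simp [muMap, TensorProduct.smul_tmul']
  rw [key, LinearMap.coe_comp]
  exact (Function.Bijective.comp
    (show Function.Bijective (LinearMap.rTensor M (muMap I I)) from (LinearEquiv.rTensor M (LinearEquiv.ofBijective (muMap I I) hI)).bijective)
    (TensorProduct.assoc A I I M).symm.bijective)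
end

section
/- (Quillen) For every A-module M the following hold. (a) Every element x of the kernel of μ_M : I ⊗_A M → M satisfies i·x = 0 in I ⊗_A M for all i ∈ I, and for every i ∈ I and m ∈ M one has i·m ∈ range μ_M. (b) The kernel of ε_M : M → Hom_A(I, M) consists exactly of those m ∈ M with i·m = 0 for all i ∈ I, and for every A-linear map f : I → M and every r ∈ I the element r·f of Hom_A(I, M) lies in the range of ε_M. -/
open TensorProduct

/-- (Quillen) For every `A`-module `M`:
(a) every element of the kernel of `μ_M : I ⊗[A] M → M` is annihilated by `I`, and
`i • m` lies in the range of `μ_M` for all `i ∈ I`, `m ∈ M`;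
(b) the kernel of `ε_M : M → Hom_A(I, M)` consists exactly of the elements of `M`
annihilated by `I`, and `r • f` lies in the range of `ε_M` for every `f : I →ₗ[A] M`
and every `r ∈ I`. -/
theorem muMap_epsMap_null_ker_coker {A : Type*} [CommRing A] (I : Ideal A)
    (M : Type*) [AddCommGroup M] [Module A M] :
    (∀ x ∈ LinearMap.ker (muMap I M), ∀ i ∈ I, i • x = 0) ∧
    (∀ i ∈ I, ∀ m : M, i • m ∈ LinearMap.range (muMap I M)) ∧
    (∀ m : M, m ∈ LinearMap.ker (epsMap I M) ↔ ∀ i ∈ I, i • m = 0) ∧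
    (∀ f : I →ₗ[A] M, ∀ r ∈ I, r • f ∈ LinearMap.range (epsMap I M)) := by
  have key : ∀ (i : A) (hi : i ∈ I) (x : I ⊗[A] M),
      i • x = (⟨i, hi⟩ : I) ⊗ₜ[A] muMap I M x := by
    intro i hi x
    induction x using TensorProduct.induction_on with
    | zero => simp
    | tmul j m =>
        simp only [muMap, TensorProduct.lift.tmul, LinearMap.comp_apply,
          Submodule.coe_subtype, LinearMap.lsmul_apply]
        rw [TensorProduct.smul_tmul', TensorProduct.tmul_smul]
        congr 1
        ext
        simp [mul_comm]
    | add x y hx hy => simp [smul_add, TensorProduct.tmul_add, hx, hy]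
  refine ⟨?_, ?_, ?_, ?_⟩
  · intro x hx i hi
    rw [key i hi x, LinearMap.mem_ker.mp hx, TensorProduct.tmul_zero]
  · intro i hi m
    exact ⟨(⟨i, hi⟩ : I) ⊗ₜ[A] m, by simp [muMap]⟩
  · intro m
    constructor
    · intro h i hi
      have := LinearMap.congr_fun (LinearMap.mem_ker.mp h) ⟨i, hi⟩
      simpa [epsMap] using this
    · intro h
      rw [LinearMap.mem_ker]
      ext ⟨i, hi⟩
      simpa [epsMap] using h i hi
  · intro f r hr
    refine ⟨f ⟨r, hr⟩, ?_⟩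
    ext ⟨i, hi⟩
    simp only [epsMap, LinearMap.flip_apply, LinearMap.comp_apply,
      Submodule.coe_subtype, LinearMap.lsmul_apply, LinearMap.smul_apply]
    rw [← f.map_smul, ← f.map_smul]
    congr 1
    ext
    simp [mul_comm]
end

section
/- (Quillen) Assume the ideal I is t-unital, and let f : L → M be an A-linear map with null kernel and cokernel. Then: (a) for every t-unital A-module D, the map id_D ⊗ f : D ⊗_A L → D ⊗_A M is bijective; (b) for every t-unital A-module E, postcomposition with f gives a bijection Hom_A(E, L) → Hom_A(E, M); (c) for every c-unital A-module P, precomposition with f gives a bijection Hom_A(M, P) → Hom_A(L, P). -/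
open TensorProduct

/-!
With `I` t-unital, null kernel and cokernel produce a map `q : I ⊗ M → L` with `f ∘ q = μ_M`
and `q ∘ (I ⊗ f) = μ_L`: on `I ⊗ (I ⊗ M) ≅ I ⊗ M` it sends `i ⊗ (j ⊗ m)` to `i • x` for any `x`
with `f x = j • m`, which is well defined because `I` kills `ker f`. Such a `q` is an inverse of
`f` up to the multiplication maps, and it yields explicit inverses of the three maps:
`(D ⊗ q) ∘ (D ⊗ μ_M)⁻¹`, `h ↦ q ∘ (I ⊗ h) ∘ μ_E⁻¹` and `h ↦ ε_P⁻¹ ∘ (m ↦ (i ↦ h (q (i ⊗ m))))`.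
For the first one, `D ⊗ μ_N` is bijective for t-unital `D` since it is `μ_D ⊗ N` up to the
isomorphism `(I ⊗ D) ⊗ N ≅ D ⊗ (I ⊗ N)`.
-/

open LinearMap

section
variable {A : Type*} [CommRing A] (I : Ideal A)
  {L M P : Type*} [AddCommGroup L] [Module A L] [AddCommGroup M] [Module A M]
  [AddCommGroup P] [Module A P]

@[simp] lemma muMap_tmul (i : I) (m : M) : muMap I M (i ⊗ₜ m) = (i : A) • m := by
  simp [muMap]

@[simp] lemma epsMap_apply (m : M) (i : I) : epsMap I M m i = (i : A) • m := rfl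

lemma muMap_comp_lTensor (g : L →ₗ[A] M) : muMap I M ∘ₗ g.lTensor I = g ∘ₗ muMap I L := by
  ext i x
  simp

lemma epsMap_comp (g : M →ₗ[A] P) : epsMap I P ∘ₗ g = (curry (g ∘ₗ muMap I M)).flip := by
  ext m i
  simp

lemma flip_curry_comp {N : Type*} [AddCommGroup N] [Module A N] (h : N ⊗[A] M →ₗ[A] P)
    (f : L →ₗ[A] M) : (curry h).flip ∘ₗ f = (curry (h ∘ₗ f.lTensor N)).flip := by
  ext x n
  simp

lemma muMap_mem_of_smul_mem {S : Submodule A M} (hS : ∀ i ∈ I, ∀ m : M, i • m ∈ S)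
    (z : I ⊗[A] M) : muMap I M z ∈ S := by
  induction z using TensorProduct.induction_on with
  | zero => simp
  | tmul i m => simpa using hS i i.2 m
  | add x y hx hy => simpa using add_mem hx hy

lemma lTensor_muMap_comp_assoc_leftComm (D N : Type*) [AddCommGroup D] [Module A D]
    [AddCommGroup N] [Module A N] :
    (muMap I N).lTensor D ∘ₗ ((TensorProduct.assoc A I D N).trans (leftComm A I D N)).toLinearMap
      = (muMap I D).rTensor N := by
  ext i d n
  simp [smul_tmul]

lemma bijective_lTensor_muMap {D : Type*} [AddCommGroup D] [Module A D]
    (hD : Function.Bijective (muMap I D)) (N : Type*) [AddCommGroup N] [Module A N] :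
    Function.Bijective ((muMap I N).lTensor D) := by
  have h := lTensor_muMap_comp_assoc_leftComm I D N
  rw [← LinearEquiv.eq_comp_toLinearMap_symm] at h
  rw [h, coe_comp]
  exact (LinearEquiv.rTensor N (.ofBijective _ hD)).bijective.comp (LinearEquiv.bijective _)

lemma exists_comp_lTensor_mkQ_eq_muMap (K : Submodule A L) (hK : ∀ i ∈ I, ∀ x ∈ K, i • x = 0) :
    ∃ r : I ⊗[A] (L ⧸ K) →ₗ[A] L, r ∘ₗ K.mkQ.lTensor I = muMap I L := by
  have hle : K ≤ ker (epsMap I L) := fun x hx => by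
    ext i
    exact hK i i.2 x hx
  refine ⟨TensorProduct.lift (K.liftQ (epsMap I L) hle).flip, ?_⟩
  ext i x
  simp

lemma exists_comp_eq_muMap (hI : Function.Bijective (muMap I I)) (f : L →ₗ[A] M)
    (hker : ∀ i ∈ I, ∀ x ∈ ker f, i • x = 0) (hcoker : ∀ i ∈ I, ∀ m : M, i • m ∈ range f) :
    ∃ q : I ⊗[A] M →ₗ[A] L, f ∘ₗ q = muMap I M ∧ q ∘ₗ f.lTensor I = muMap I L := by
  set π := (ker f).mkQ
  set fbar := (ker f).liftQ f le_rfl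
  have hf : fbar ∘ₗ π = f := (ker f).liftQ_mkQ f le_rfl
  have hfbar : Function.Injective fbar :=
    ker_eq_bot.mp ((ker f).ker_liftQ_eq_bot f le_rfl le_rfl)
  have hmem (z : I ⊗[A] M) : muMap I M z ∈ range fbar := by
    rw [Submodule.range_liftQ]
    exact muMap_mem_of_smul_mem I hcoker z
  set p := codRestrictOfInjective (muMap I M) fbar hfbar hmem
  have hp : fbar ∘ₗ p = muMap I M := codRestrictOfInjective_comp _ _ _ _
  obtain ⟨r, hr⟩ := exists_comp_lTensor_mkQ_eq_muMap I (ker f) hker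
  have hpf : p ∘ₗ f.lTensor I = π ∘ₗ muMap I L := by
    rw [← cancel_left hfbar, ← comp_assoc, hp, muMap_comp_lTensor, ← comp_assoc, hf]
  have hfr : f ∘ₗ r = muMap I M ∘ₗ fbar.lTensor I := by
    rw [← cancel_right (lTensor_surjective I (ker f).mkQ_surjective), comp_assoc, hr,
      comp_assoc, ← lTensor_comp, hf, muMap_comp_lTensor]
  set e := LinearEquiv.ofBijective _ (bijective_lTensor_muMap I hI M)
  set q := r ∘ₗ p.lTensor I ∘ₗ e.symm.toLinearMap
  have he : e.symm.toLinearMap ∘ₗ (muMap I M).lTensor I = LinearMap.id := e.symm_comp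
  have hq : q ∘ₗ (muMap I M).lTensor I = r ∘ₗ p.lTensor I := by
    rw [comp_assoc, comp_assoc, he, comp_id]
  refine ⟨q, ?_, ?_⟩
  · rw [← cancel_right (bijective_lTensor_muMap I hI M).surjective, comp_assoc, hq,
      ← comp_assoc, hfr, comp_assoc, ← lTensor_comp, hp]
  · rw [← cancel_right (bijective_lTensor_muMap I hI L).surjective, comp_assoc, ← lTensor_comp,
      ← muMap_comp_lTensor, lTensor_comp, ← comp_assoc, hq, comp_assoc, ← lTensor_comp, hpf,
      lTensor_comp, ← comp_assoc, hr]

end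

section
variable {A : Type*} [CommRing A] {I : Ideal A}
  {L M : Type*} [AddCommGroup L] [Module A L] [AddCommGroup M] [Module A M]
  {f : L →ₗ[A] M} {q : I ⊗[A] M →ₗ[A] L}

lemma bijective_lTensor_of_comp_eq_muMap (hfq : f ∘ₗ q = muMap I M)
    (hqf : q ∘ₗ f.lTensor I = muMap I L) {D : Type*} [AddCommGroup D] [Module A D]
    (hD : Function.Bijective (muMap I D)) : Function.Bijective (f.lTensor D) := by
  set e := LinearEquiv.ofBijective _ (bijective_lTensor_muMap I hD M)
  have hnat : (muMap I M).lTensor D ∘ₗ (f.lTensor I).lTensor D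
      = f.lTensor D ∘ₗ (muMap I L).lTensor D := by
    rw [← lTensor_comp, ← lTensor_comp, muMap_comp_lTensor]
  have he : e.symm.toLinearMap ∘ₗ (muMap I M).lTensor D = LinearMap.id := e.symm_comp
  have hleft : q.lTensor D ∘ₗ e.symm.toLinearMap ∘ₗ f.lTensor D = LinearMap.id := by
    rw [← cancel_right (bijective_lTensor_muMap I hD L).surjective, comp_assoc, comp_assoc,
      ← hnat, ← comp_assoc _ _ e.symm.toLinearMap, he, id_comp, ← lTensor_comp, hqf, id_comp]
  have hright : f.lTensor D ∘ₗ q.lTensor D ∘ₗ e.symm.toLinearMap = LinearMap.id := by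
    rw [← comp_assoc, ← lTensor_comp, hfq]
    exact e.comp_symm
  exact Function.bijective_iff_has_inverse.mpr
    ⟨q.lTensor D ∘ₗ e.symm.toLinearMap, LinearMap.congr_fun hleft, LinearMap.congr_fun hright⟩

lemma bijective_comp_left_of_comp_eq_muMap (hfq : f ∘ₗ q = muMap I M)
    (hqf : q ∘ₗ f.lTensor I = muMap I L) {E : Type*} [AddCommGroup E] [Module A E]
    (hE : Function.Bijective (muMap I E)) : Function.Bijective (fun g : E →ₗ[A] L => f ∘ₗ g) := by
  set e := LinearEquiv.ofBijective _ hE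
  have he : muMap I E ∘ₗ e.symm.toLinearMap = LinearMap.id := e.comp_symm
  refine Function.bijective_iff_has_inverse.mpr
    ⟨fun h => q ∘ₗ h.lTensor I ∘ₗ e.symm.toLinearMap, fun g => ?_, fun h => ?_⟩
  · dsimp only
    rw [lTensor_comp, ← comp_assoc, ← comp_assoc, hqf, muMap_comp_lTensor, comp_assoc, he, comp_id]
  · dsimp only
    rw [← comp_assoc, hfq, ← comp_assoc, muMap_comp_lTensor, comp_assoc, he, comp_id]

lemma bijective_comp_right_of_comp_eq_muMap (hfq : f ∘ₗ q = muMap I M)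
    (hqf : q ∘ₗ f.lTensor I = muMap I L) {P : Type*} [AddCommGroup P] [Module A P]
    (hP : Function.Bijective (epsMap I P)) : Function.Bijective (fun g : M →ₗ[A] P => g ∘ₗ f) := by
  set e := LinearEquiv.ofBijective _ hP
  have he : e.symm.toLinearMap ∘ₗ epsMap I P = LinearMap.id := e.symm_comp
  refine Function.bijective_iff_has_inverse.mpr
    ⟨fun h => e.symm.toLinearMap ∘ₗ (curry (h ∘ₗ q)).flip, fun g => ?_, fun h => ?_⟩
  · dsimp only
    rw [comp_assoc, hfq, ← epsMap_comp, ← comp_assoc, he, id_comp]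
  · dsimp only
    rw [comp_assoc, flip_curry_comp, comp_assoc, hqf, ← epsMap_comp, ← comp_assoc, he, id_comp]

end

/-- (Quillen) Let `I` be a t-unital ideal and `f : L → M` an `A`-linear map with
null kernel and cokernel. Then:
(a) for every t-unital `A`-module `D`, the map `id_D ⊗ f : D ⊗[A] L → D ⊗[A] M`
is bijective;
(b) for every t-unital `A`-module `E`, postcomposition with `f` is a bijection
`Hom_A(E, L) → Hom_A(E, M)`;
(c) for every c-unital `A`-module `P`, precomposition with `f` is a bijection
`Hom_A(M, P) → Hom_A(L, P)`. -/
theorem bijective_of_null_ker_coker_t_c_unital {A : Type*} [CommRing A]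
    (I : Ideal A)
    (hI : Function.Bijective (muMap I I))
    {L M : Type*} [AddCommGroup L] [Module A L] [AddCommGroup M] [Module A M]
    (f : L →ₗ[A] M)
    (hker : ∀ i ∈ I, ∀ x ∈ LinearMap.ker f, i • x = 0)
    (hcoker : ∀ i ∈ I, ∀ m : M, i • m ∈ LinearMap.range f) :
    (∀ (D : Type*) [AddCommGroup D] [Module A D],
      Function.Bijective (muMap I D) →
      Function.Bijective (LinearMap.lTensor D f)) ∧
    (∀ (E : Type*) [AddCommGroup E] [Module A E],
      Function.Bijective (muMap I E) →
      Function.Bijective (fun g : E →ₗ[A] L => f ∘ₗ g)) ∧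
    (∀ (P : Type*) [AddCommGroup P] [Module A P],
      Function.Bijective (epsMap I P) →
      Function.Bijective (fun g : M →ₗ[A] P => g ∘ₗ f)) := by
  obtain ⟨q, hfq, hqf⟩ := exists_comp_eq_muMap I hI f hker hcoker
  exact ⟨fun D _ _ => bijective_lTensor_of_comp_eq_muMap hfq hqf,
    fun E _ _ => bijective_comp_left_of_comp_eq_muMap hfq hqf,
    fun P _ _ => bijective_comp_right_of_comp_eq_muMap hfq hqf⟩
end

section
/- Let A and B be commutative unital rings, φ : A → B a ring homomorphism, and I ⊆ A, J ⊆ B ideals with φ(I) ⊆ J. Regard J as an A-module via φ. If the A-linear map I ⊗_A J → J determined by i ⊗ j ↦ φ(i)·j is bijective, then the ideal J is t-unital; that is, the multiplication map μ_J : J ⊗_B J → J, j ⊗ j' ↦ jj', is bijective. -/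
open TensorProduct

section Aux


variable {A B : Type*} [CommRing A] [CommRing B] [Algebra A B]

/-- `ι i = ⟨φ i⟩ : J`. -/
def iotaAux (I : Ideal A) (J : Ideal B) (hIJ : ∀ i ∈ I, algebraMap A B i ∈ J) (i : I) : J :=
  ⟨algebraMap A B (i : A), hIJ i i.2⟩

/-- `p : I ⊗[A] J →+ J ⊗[B] J`, `i ⊗ m ↦ ⟨φ i⟩ ⊗ m`. -/
noncomputable def pAux (I : Ideal A) (J : Ideal B) (hIJ : ∀ i ∈ I, algebraMap A B i ∈ J) :
    I ⊗[A] J →+ J ⊗[B] J :=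
  TensorProduct.liftAddHom
    { toFun := fun i =>
        { toFun := fun m => iotaAux I J hIJ i ⊗ₜ[B] m
          map_zero' := tmul_zero _ _
          map_add' := fun m m' => tmul_add _ m m' }
      map_zero' := by
        ext m
        have : iotaAux I J hIJ 0 = 0 := by apply Subtype.ext; simp [iotaAux]
        simp [this]
      map_add' := fun i i' => by
        ext m
        have : iotaAux I J hIJ (i + i') = iotaAux I J hIJ i + iotaAux I J hIJ i' := by
          apply Subtype.ext; simp [iotaAux]
        simp [this, add_tmul] }
    (by
      intro a i m
      simp only [AddMonoidHom.coe_mk, ZeroHom.coe_mk]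
      have h1 : iotaAux I J hIJ (a • i) = (algebraMap A B a) • iotaAux I J hIJ i := by
        apply Subtype.ext; simp [iotaAux, Algebra.smul_def]
      rw [h1, smul_tmul, algebraMap_smul])

@[simp] lemma pAux_tmul (I : Ideal A) (J : Ideal B) (hIJ : ∀ i ∈ I, algebraMap A B i ∈ J)
    (i : I) (m : J) :
    pAux I J hIJ (i ⊗ₜ m) = iotaAux I J hIJ i ⊗ₜ[B] m := rfl

/-- multiplication by `j : J` as an `A`-linear endomorphism of `J`. -/
def jmulAux (J : Ideal B) (j : J) : J →ₗ[A] J where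
  toFun m := (j : B) • m
  map_add' m m' := smul_add _ m m'
  map_smul' a m := (smul_comm a ((j : B)) m).symm

/-- `g j : I ⊗[A] J → I ⊗[A] J`, `i ⊗ m ↦ i ⊗ (j • m)`. -/
noncomputable def gAux (I : Ideal A) (J : Ideal B) (j : J) : I ⊗[A] J →ₗ[A] I ⊗[A] J :=
  LinearMap.lTensor I (jmulAux (A := A) J j)

@[simp] lemma gAux_tmul (I : Ideal A) (J : Ideal B) (j : J) (i : I) (m : J) :
    gAux I J j (i ⊗ₜ m) = i ⊗ₜ ((j : B) • m) := by
  simp [gAux, LinearMap.lTensor_tmul, jmulAux]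

end Aux

set_option maxHeartbeats 1000000 in
set_option synthInstance.maxHeartbeats 400000 in
/-- Let `φ : A → B` be a homomorphism of commutative rings (encoded by the algebra
structure, `φ = algebraMap A B`), and let `I ⊆ A`, `J ⊆ B` be ideals with
`φ(I) ⊆ J`.  If the `A`-linear map `I ⊗[A] J → J` determined by
`i ⊗ j ↦ φ(i) • j` is bijective, then the ideal `J` is t-unital, i.e. the
multiplication map `μ_J : J ⊗[B] J → J` is bijective. -/
theorem t_unital_of_t_unital_homomorphism {A B : Type*} [CommRing A] [CommRing B]
    [Algebra A B] (I : Ideal A) (J : Ideal B)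
    (hIJ : ∀ i ∈ I, algebraMap A B i ∈ J)
    (h : Function.Bijective
      (TensorProduct.lift ((LinearMap.lsmul A J).comp I.subtype) :
        I ⊗[A] J →ₗ[A] J)) :
    Function.Bijective (muMap J J) := by
  classical
  set f : I ⊗[A] J →ₗ[A] J :=
    (TensorProduct.lift ((LinearMap.lsmul A J).comp I.subtype)) with hfdef
  have hf : ∀ (i : I) (m : J), f (i ⊗ₜ m) = (algebraMap A B (i : A)) • m := by
    intro i m
    simp only [hfdef, TensorProduct.lift.tmul, LinearMap.comp_apply, Submodule.subtype_apply,
      LinearMap.lsmul_apply]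
    exact (algebraMap_smul B (i : A) m).symm
  have hmu : ∀ (j j' : J), muMap J J (j ⊗ₜ j') = (j : B) • j' := by
    intro j j'
    simp [muMap, TensorProduct.lift.tmul]
  set p := pAux I J hIJ with hpdef
  -- claim 1 : f (g j u) = j • f u
  have claim1 : ∀ (j : J) (u : I ⊗[A] J), f (gAux I J j u) = (j : B) • f u := by
    intro j u
    induction u using TensorProduct.induction_on with
    | zero =>
      rw [LinearMap.map_zero, LinearMap.map_zero, smul_zero]
    | tmul i m =>
      rw [gAux_tmul, hf, hf, smul_comm]
    | add x y hx hy =>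
      rw [LinearMap.map_add, LinearMap.map_add, LinearMap.map_add, hx, hy, smul_add]
  -- claim 2 : p (g j u) = j ⊗ f u
  have claim2 : ∀ (j : J) (u : I ⊗[A] J), p (gAux I J j u) = j ⊗ₜ[B] (f u) := by
    intro j u
    induction u using TensorProduct.induction_on with
    | zero =>
      rw [LinearMap.map_zero, AddMonoidHom.map_zero, LinearMap.map_zero, tmul_zero]
    | tmul i m =>
      rw [gAux_tmul, hpdef, pAux_tmul, hf]
      rw [tmul_smul, smul_tmul', tmul_smul, smul_tmul']
      congr 1
      apply Subtype.ext
      simp only [Submodule.coe_smul_of_tower, iotaAux, Algebra.smul_def]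
      exact mul_comm _ _
    | add x y hx hy =>
      rw [LinearMap.map_add, AddMonoidHom.map_add, hx, hy, LinearMap.map_add, tmul_add]
  let e : (I ⊗[A] J) ≃ₗ[A] J := LinearEquiv.ofBijective f h
  have he : ∀ u, e u = f u := fun u => rfl
  -- claim 0 : μ (p u) = f u
  have claim0 : ∀ u : I ⊗[A] J, muMap J J (p u) = f u := by
    intro u
    induction u using TensorProduct.induction_on with
    | zero =>
      rw [AddMonoidHom.map_zero, LinearMap.map_zero, LinearMap.map_zero]
    | tmul i m =>
      rw [hpdef, pAux_tmul, hmu, hf]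
      rfl
    | add x y hx hy =>
      rw [AddMonoidHom.map_add, LinearMap.map_add, hx, hy, LinearMap.map_add]
  -- claim 3 : p (e.symm (μ x)) = x
  have claim3 : ∀ x : J ⊗[B] J, p (e.symm (muMap J J x)) = x := by
    intro x
    induction x using TensorProduct.induction_on with
    | zero =>
      rw [LinearMap.map_zero, LinearEquiv.map_zero, AddMonoidHom.map_zero]
    | tmul j j' =>
      rw [hmu]
      have h1 : (j : B) • j' = f (gAux I J j (e.symm j')) := by
        rw [claim1, ← he, e.apply_symm_apply]
      rw [h1, ← he, e.symm_apply_apply, claim2, ← he, e.apply_symm_apply]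
    | add x y hx hy =>
      rw [LinearMap.map_add, LinearEquiv.map_add, AddMonoidHom.map_add, hx, hy]
  constructor
  · intro x y hxy
    have hx := claim3 x
    rw [hxy, claim3 y] at hx
    exact hx.symm
  · intro m
    exact ⟨p (e.symm m), by rw [claim0, ← he, e.apply_symm_apply]⟩
end

section
/- Let A and B be commutative unital rings, φ : A → B a ring homomorphism, and I ⊆ A, J ⊆ B ideals with φ(I) ⊆ J. Let M be a B-module, regarded also as an A-module via φ. Then: (a) if the A-linear map I ⊗_A M → M determined by i ⊗ m ↦ φ(i)·m is bijective, then the B-linear map J ⊗_B M → M determined by j ⊗ m ↦ j·m is bijective; (b) if the map M → Hom_A(I, M), m ↦ (i ↦ φ(i)·m), is bijective, then the map M → Hom_B(J, M), m ↦ (j ↦ j·m), is bijective. -/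
open TensorProduct

section Aux

set_option linter.unusedSectionVars false

variable {A B : Type*} [CommRing A] [CommRing B] [Algebra A B]
    (I : Ideal A) (J : Ideal B) (hIJ : ∀ i ∈ I, algebraMap A B i ∈ J)
    (M : Type*) [AddCommGroup M] [Module B M] [Module A M] [IsScalarTower A B M]

/-- The bilinear (additive) map `(i, m) ↦ φ(i) ⊗ m`. -/
noncomputable def thetaBil : I →+ (M →+ J ⊗[B] M) :=
  AddMonoidHom.mk'
    (fun i => AddMonoidHom.mk'
      (fun m => (⟨algebraMap A B i, hIJ i i.2⟩ : J) ⊗ₜ[B] m)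
      (fun m m' => TensorProduct.tmul_add _ m m'))
    (by
      intro i i'
      ext m
      have h : (⟨algebraMap A B ((i : A) + (i' : A)), hIJ _ (I.add_mem i.2 i'.2)⟩ : J)
          = ⟨algebraMap A B i, hIJ i i.2⟩ + ⟨algebraMap A B i', hIJ i' i'.2⟩ := by
        ext; simp [map_add]
      simp only [AddMonoidHom.mk'_apply, AddMonoidHom.add_apply, Submodule.coe_add]
      rw [h, TensorProduct.add_tmul])

/-- The natural additive map `I ⊗[A] M →+ J ⊗[B] M`, `i ⊗ m ↦ φ(i) ⊗ m`. -/
noncomputable def thetaMap : I ⊗[A] M →+ J ⊗[B] M :=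
  TensorProduct.liftAddHom (thetaBil I J hIJ M)
    (by
      intro a i m
      show (⟨algebraMap A B ((a • i : I) : A), _⟩ : J) ⊗ₜ[B] m
          = (⟨algebraMap A B (i : A), _⟩ : J) ⊗ₜ[B] (a • m)
      have h1 : (a • m) = (algebraMap A B a) • m := (algebraMap_smul B a m).symm
      have h2 : (⟨algebraMap A B ((a • i : I) : A), hIJ _ (a • i : I).2⟩ : J)
          = (algebraMap A B a) • (⟨algebraMap A B (i : A), hIJ i i.2⟩ : J) := by
        ext; simp [Algebra.smul_def, smul_eq_mul, map_mul]
      rw [h1, h2, TensorProduct.smul_tmul])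

@[simp] lemma thetaMap_tmul (i : I) (m : M) :
    thetaMap I J hIJ M (i ⊗ₜ[A] m) = (⟨algebraMap A B i, hIJ i i.2⟩ : J) ⊗ₜ[B] m :=
  TensorProduct.liftAddHom_tmul _ _ _ _

end Aux

/-- Let `φ : A → B` be a homomorphism of commutative rings (encoded by the algebra
structure, `φ = algebraMap A B`), `I ⊆ A`, `J ⊆ B` ideals with `φ(I) ⊆ J`, and
`M` a `B`-module, regarded as an `A`-module via `φ` (encoded by the scalar
tower).  Then:
(a) if the `A`-linear map `I ⊗[A] M → M` determined by `i ⊗ m ↦ φ(i) • m` is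
bijective, then the `B`-linear map `J ⊗[B] M → M` determined by `j ⊗ m ↦ j • m`
is bijective;
(b) if the map `M → Hom_A(I, M)`, `m ↦ (i ↦ φ(i) • m)`, is bijective, then the
map `M → Hom_B(J, M)`, `m ↦ (j ↦ j • m)`, is bijective. -/
theorem restriction_of_scalars_t_c_unitality {A B : Type*} [CommRing A] [CommRing B]
    [Algebra A B] (I : Ideal A) (J : Ideal B)
    (hIJ : ∀ i ∈ I, algebraMap A B i ∈ J)
    (M : Type*) [AddCommGroup M] [Module B M] [Module A M] [IsScalarTower A B M] :
    (Function.Bijective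
        (TensorProduct.lift ((LinearMap.lsmul A M).comp I.subtype) :
          I ⊗[A] M →ₗ[A] M) →
      Function.Bijective (muMap J M)) ∧
    (Function.Bijective
        (((LinearMap.lsmul A M).comp I.subtype).flip : M →ₗ[A] (I →ₗ[A] M)) →
      Function.Bijective (epsMap J M)) := by
  constructor
  · -- part (a)
    intro hA
    set μA : I ⊗[A] M →ₗ[A] M :=
      TensorProduct.lift ((LinearMap.lsmul A M).comp I.subtype) with hμA
    set θ := thetaMap I J hIJ M with hθ
    have hμA_tmul : ∀ (i : I) (m : M), μA (i ⊗ₜ[A] m) = (i : A) • m := by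
      intro i m; simp [hμA]
    have hμB_tmul : ∀ (j : J) (m : M), muMap J M (j ⊗ₜ[B] m) = (j : B) • m := by
      intro j m; simp [muMap]
    -- μB ∘ θ = μA
    have hcomp : ∀ x : I ⊗[A] M, muMap J M (θ x) = μA x := by
      intro x
      induction x using TensorProduct.induction_on with
      | zero => simp
      | tmul i m =>
        rw [hθ, thetaMap_tmul, hμB_tmul, hμA_tmul, algebraMap_smul]
      | add x y hx hy => simp [map_add, hx, hy]
    -- θ is surjective
    have hθsurj : Function.Surjective θ := by
      intro z
      induction z using TensorProduct.induction_on with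
      | zero => exact ⟨0, map_zero _⟩
      | tmul j m =>
        obtain ⟨y, hy⟩ := hA.2 m
        -- the A-linear map `m ↦ (j : B) • m`
        set f : M →ₗ[A] M := (LinearMap.lsmul B M (j : B)).restrictScalars A with hf
        refine ⟨LinearMap.lTensor I f y, ?_⟩
        have key : ∀ w : I ⊗[A] M,
            θ (LinearMap.lTensor I f w) = j ⊗ₜ[B] (μA w) := by
          intro w
          induction w using TensorProduct.induction_on with
          | zero => simp
          | tmul i m' =>
            rw [LinearMap.lTensor_tmul, hθ, thetaMap_tmul, hμA_tmul]
            have hfm : (f m') = (j : B) • m' := rfl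
            rw [hfm, ← TensorProduct.smul_tmul]
            rw [← algebraMap_smul B (i : A) m', TensorProduct.tmul_smul,
              TensorProduct.smul_tmul']
            congr 1
            ext
            simp [Algebra.smul_def, smul_eq_mul, mul_comm]
          | add w₁ w₂ h₁ h₂ => simp [map_add, h₁, h₂, TensorProduct.tmul_add]
        rw [key, hy]
      | add z₁ z₂ h₁ h₂ =>
        obtain ⟨y₁, hy₁⟩ := h₁
        obtain ⟨y₂, hy₂⟩ := h₂
        exact ⟨y₁ + y₂, by rw [map_add, hy₁, hy₂]⟩
    constructor
    · intro x y hxy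
      obtain ⟨x', rfl⟩ := hθsurj x
      obtain ⟨y', rfl⟩ := hθsurj y
      rw [hcomp, hcomp] at hxy
      rw [hA.1 hxy]
    · intro m
      obtain ⟨y, hy⟩ := hA.2 m
      exact ⟨θ y, by rw [hcomp, hy]⟩
  · -- part (b)
    intro hA
    set εA : M →ₗ[A] (I →ₗ[A] M) :=
      ((LinearMap.lsmul A M).comp I.subtype).flip with hεA
    have hεA_apply : ∀ (m : M) (i : I), εA m i = (i : A) • m := fun m i => rfl
    have hεB_apply : ∀ (m : M) (j : J), epsMap J M m j = (j : B) • m := fun m j => rfl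
    -- restriction map ρ
    set ρ : (J →ₗ[B] M) → (I →ₗ[A] M) := fun f =>
      { toFun := fun i => f ⟨algebraMap A B i, hIJ i i.2⟩
        map_add' := by
          intro i i'
          have h : (⟨algebraMap A B ((i : A) + (i' : A)), hIJ _ (I.add_mem i.2 i'.2)⟩ : J)
              = ⟨algebraMap A B (i : A), hIJ i i.2⟩
                + ⟨algebraMap A B (i' : A), hIJ i' i'.2⟩ := by
            ext; simp [map_add]
          simp only [Submodule.coe_add]
          rw [h, map_add]
        map_smul' := by
          intro a i
          show f ⟨algebraMap A B ((a • i : I) : A), _⟩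
              = a • f ⟨algebraMap A B (i : A), _⟩
          have h2 : (⟨algebraMap A B ((a • i : I) : A), hIJ _ (a • i : I).2⟩ : J)
              = (algebraMap A B a) • (⟨algebraMap A B (i : A), hIJ i i.2⟩ : J) := by
            ext; simp [Algebra.smul_def, smul_eq_mul, map_mul]
          rw [h2, map_smul, algebraMap_smul] } with hρ
    have hcomp : ∀ m : M, ρ (epsMap J M m) = εA m := by
      intro m
      ext i
      show epsMap J M m ⟨algebraMap A B (i : A), _⟩ = εA m i
      rw [hεB_apply, hεA_apply, algebraMap_smul]
    -- ρ is injective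
    have hρinj : Function.Injective ρ := by
      intro f g hfg
      set h : J →ₗ[B] M := f - g with hh
      have hres : ∀ i : I, h ⟨algebraMap A B i, hIJ i i.2⟩ = 0 := by
        intro i
        have := congrArg (fun ψ : I →ₗ[A] M => ψ i) hfg
        simp only [hρ, LinearMap.coe_mk, AddHom.coe_mk] at this
        simp [hh, LinearMap.sub_apply, sub_eq_zero, this]
      have hzero : ∀ j : J, h j = 0 := by
        intro j
        have key : ∀ i : I, (i : A) • (h j) = 0 := by
          intro i
          have e1 : (i : A) • h j = (algebraMap A B (i : A)) • h j :=
            (algebraMap_smul B (i : A) (h j)).symm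
          have e2 : (algebraMap A B (i : A)) • j
              = (j : B) • (⟨algebraMap A B (i : A), hIJ i i.2⟩ : J) := by
            ext; simp [Algebra.smul_def, smul_eq_mul, mul_comm]
          rw [e1, ← map_smul, e2, map_smul, hres i, smul_zero]
        have : εA (h j) = εA 0 := by
          rw [map_zero]
          exact LinearMap.ext fun i => by
            rw [hεA_apply, key i, LinearMap.zero_apply]
        simpa using hA.1 this
      ext j
      have := hzero j
      rw [hh, LinearMap.sub_apply, sub_eq_zero] at this
      exact this
    constructor
    · intro m m' hmm'
      apply hA.1
      rw [← hcomp, ← hcomp, hmm']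
    · intro g
      obtain ⟨m, hm⟩ := hA.2 (ρ g)
      exact ⟨m, hρinj (by rw [hcomp, hm])⟩
end
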